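/- Let n = p_1^{α_1} ⋯ p_s^{α_s} with s ≥ 2 distinct primes. If t ≤ (n+1)/(2^{s+1}√(2s−1) + 1), then φ_{⌊n/t⌋}(n) ≥ φ(n)/(2.2·t). -/

import Mathlib

/-- Legendre's totient function φ_m(n): the number of a ∈ [1,m] coprime to n. -/
def legendrePhi (m n : ℕ) : ℕ :=
  ((Finset.Icc 1 m).filter fun a => Nat.Coprime a n).card

/-!
Inclusion–exclusion over the prime divisors of `n` writes
`φ_m(n) = ∑_{T ⊆ P(n)} (-1)^|T| ⌊m / ∏ T⌋`. Replacing every floor by the exact quotient turns the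
sum into `m · φ(n)/n`; only the `2^(s-1) - 1` nonempty subsets of even size can lower the count,
each by less than `1`. Since the `i`-th smallest prime is at least `2i - 1` and
`(2k/(2k+1))² ≥ (2k-1)/(2k+1)`, induction on the largest prime gives `φ(n)/n ≥ 1/(2√(2s-1))`.
The bound on `t` then makes `(n/t) · φ(n)/n ≥ 2^s`, which absorbs both the error `2^(s-1)` and the
loss in `⌊n/t⌋ ≥ n/t - 1`.
-/

open Finset

theorem Finset.card_filter_univ_coe {α : Type*} (s : Finset α) (P : α → Prop) [DecidablePred P] :
    #({a : s | P a} : Finset s) = #{a ∈ s | P a} := by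
  rw [univ_eq_attach, filter_attach, card_map, card_attach]

theorem Finset.sum_powerset_neg_one_pow_mul_le {α K : Type*} [DecidableEq α] [Field K]
    [LinearOrder K] [IsStrictOrderedRing K] {S : Finset α}
    (hS : S.Nonempty) (f : Finset α → K) (hf_empty : f ∅ = 0)
    (hf : ∀ T ∈ S.powerset, 0 ≤ f T ∧ f T ≤ 1) :
    ∑ T ∈ S.powerset, (-1) ^ #T * f T ≤ 2 ^ #S / 2 - 1 := by
  have hterm : ∀ T ∈ S.powerset, (-1) ^ #T * f T ≤ (1 + (-1) ^ #T) / 2 := by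
    intro T hT
    rcases Nat.even_or_odd #T with h | h <;> rw [h.neg_one_pow] <;> linarith [hf T hT]
  have hsum : ∑ T ∈ S.powerset, (1 + (-1 : K) ^ #T) / 2 = 2 ^ #S / 2 := by
    have h0 : ∑ T ∈ S.powerset, (-1 : K) ^ #T = 0 := by
      exact_mod_cast sum_powerset_neg_one_pow_card_of_nonempty hS
    rw [← sum_div, sum_add_distrib, h0, sum_const, card_powerset]
    simp
  have hempty := empty_mem_powerset S
  calc ∑ T ∈ S.powerset, (-1) ^ #T * f T
      = ∑ T ∈ S.powerset.erase ∅, (-1) ^ #T * f T := (sum_erase _ (by simp [hf_empty])).symm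
    _ ≤ ∑ T ∈ S.powerset.erase ∅, (1 + (-1 : K) ^ #T) / 2 :=
        sum_le_sum fun T hT => hterm T (mem_of_mem_erase hT)
    _ = 2 ^ #S / 2 - 1 := by
        rw [← hsum, ← add_sum_erase _ _ hempty]
        norm_num

theorem Finset.prod_one_sub_eq_sum_powerset {ι K : Type*} [CommRing K] (S : Finset ι) (f : ι → K) :
    ∏ i ∈ S, (1 - f i) = ∑ T ∈ S.powerset, (-1) ^ #T * ∏ i ∈ T, f i := by
  simp only [sub_eq_add_neg, prod_one_add, prod_neg]

theorem Nat.cast_totient_eq_mul_prod {K : Type*} [Field K] [CharZero K] (n : ℕ) :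
    (n.totient : K) = n * ∏ p ∈ n.primeFactors, (1 - (p : K)⁻¹) := by
  simpa using congrArg (Rat.cast : ℚ → K) (Nat.totient_eq_mul_prod_factors n)

theorem Nat.cast_div_sub_one_lt {K : Type*} [Field K] [LinearOrder K] [IsStrictOrderedRing K]
    [FloorSemiring K] (m d : ℕ) : (m / d : K) - 1 < (m / d : ℕ) := by
  simpa only [Nat.floor_div_eq_div] using Nat.sub_one_lt_floor ((m : K) / d)

theorem legendrePhi_eq_sum_powerset (m : ℕ) {n : ℕ} (hn : n ≠ 0) :
    (legendrePhi m n : ℤ) =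
      ∑ T ∈ n.primeFactors.powerset, (-1) ^ #T * ((m / ∏ p ∈ T, p : ℕ) : ℤ) := by
  have hcoprime : (n.primeFactors.inf fun p => ({a : Icc 1 m | p ∣ (a : ℕ)} : Finset _)ᶜ) =
      ({a : Icc 1 m | (a : ℕ).Coprime n} : Finset _) := by
    ext a
    simp only [mem_inf, mem_compl, mem_filter_univ]
    refine ⟨fun h => Nat.coprime_of_dvd fun p hp hpa hpn => h p ?_ hpa, fun h p hp hpa => ?_⟩
    · exact Nat.mem_primeFactors.2 ⟨hp, hpn, hn⟩
    · exact (Nat.prime_of_mem_primeFactors hp).one_lt.ne'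
        (Nat.eq_one_of_dvd_coprimes h hpa (Nat.dvd_of_mem_primeFactors hp))
  have hdvd : ∀ T ∈ n.primeFactors.powerset,
      T.inf (fun p => ({a : Icc 1 m | p ∣ (a : ℕ)} : Finset _)) =
        ({a : Icc 1 m | ∏ p ∈ T, p ∣ (a : ℕ)} : Finset _) := by
    intro T hT
    ext a
    simp only [mem_inf, mem_filter_univ]
    refine ⟨fun h => prod_primes_dvd _ (fun p hp => ?_) h,
      fun h p hp => (dvd_prod_of_mem _ hp).trans h⟩
    exact (Nat.prime_of_mem_primeFactors (mem_powerset.1 hT hp)).prime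
  rw [legendrePhi, ← card_filter_univ_coe (Icc 1 m) (·.Coprime n), ← hcoprime,
    inclusion_exclusion_card_inf_compl]
  refine sum_congr rfl fun T hT => ?_
  rw [hdvd T hT, card_filter_univ_coe (Icc 1 m) (∏ p ∈ T, p ∣ ·),
    show Icc 1 m = Ioc 0 m from Icc_add_one_left_eq_Ioc 0 m, Nat.Ioc_filter_dvd_card_eq_div]

theorem legendrePhi_ge (m : ℕ) {n : ℕ} (hn : 1 < n) :
    m * (n.totient / n : ℝ) - (2 ^ #n.primeFactors / 2 - 1) ≤ legendrePhi m n := by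
  have hn0 : n ≠ 0 := by omega
  set frac : Finset ℕ → ℝ := fun T => m / ∏ p ∈ T, (p : ℝ) - ((m / ∏ p ∈ T, p : ℕ) : ℝ)
  have hfrac : ∀ T ∈ n.primeFactors.powerset, 0 ≤ frac T ∧ frac T ≤ 1 := by
    intro T _
    have h := Nat.cast_div_sub_one_lt (K := ℝ) m (∏ p ∈ T, p)
    have h' : ((m / ∏ p ∈ T, p : ℕ) : ℝ) ≤ m / ((∏ p ∈ T, p : ℕ) : ℝ) := Nat.cast_div_le
    push_cast at h h'
    constructor <;> simp only [frac] <;> linarith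
  have herror := sum_powerset_neg_one_pow_mul_le (Nat.nonempty_primeFactors.2 hn) frac
    (by simp [frac]) hfrac
  have hmain : ∑ T ∈ n.primeFactors.powerset, (-1) ^ #T * (m / ∏ p ∈ T, (p : ℝ)) =
      m * (n.totient / n : ℝ) := by
    have hn' : (n : ℝ) ≠ 0 := by exact_mod_cast hn0
    rw [Nat.cast_totient_eq_mul_prod, mul_div_cancel_left₀ _ hn', prod_one_sub_eq_sum_powerset,
      mul_sum]
    refine sum_congr rfl fun T _ => ?_
    rw [prod_inv_distrib]
    ring
  have hphi := congrArg (Int.cast : ℤ → ℝ) (legendrePhi_eq_sum_powerset m hn0)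
  simp only [Int.cast_sum, Int.cast_mul, Int.cast_pow, Int.cast_neg, Int.cast_one,
    Int.cast_natCast] at hphi
  rw [hphi, ← hmain]
  simp only [frac, mul_sub, sum_sub_distrib] at herror
  linarith

theorem Nat.two_mul_card_le_of_forall_prime_le {S : Finset ℕ} {M : ℕ}
    (hS : ∀ p ∈ S, p.Prime ∧ p ≤ M) : 2 * #S ≤ M + 1 := by
  -- `p ↦ (p - 1) / 2` is injective on primes, since `2` is the only even prime.
  have hinj : Set.InjOn (fun p => (p - 1) / 2) S := by
    intro p hp q hq hpq
    have := (hS p hp).1.eq_two_or_odd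
    have := (hS q hq).1.eq_two_or_odd
    have := (hS p hp).1.two_le
    have := (hS q hq).1.two_le
    simp only at hpq
    omega
  have hmaps : Set.MapsTo (fun p => (p - 1) / 2) S (range ((M + 1) / 2)) := by
    intro p hp
    have := (hS p hp).2
    have := (hS p hp).1.two_le
    simp only [coe_range, Set.mem_Iio]
    omega
  have := card_le_card_of_injOn _ hmaps hinj
  rw [card_range] at this
  omega

theorem two_mul_add_one_mul_sqrt_le (k : ℝ) (hk : 1 / 2 ≤ k) :
    (2 * k + 1) * √(2 * k - 1) ≤ 2 * k * √(2 * k + 1) := by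
  have h1 : ((2 * k + 1) * √(2 * k - 1)) ^ 2 ≤ (2 * k * √(2 * k + 1)) ^ 2 := by
    rw [mul_pow, mul_pow, Real.sq_sqrt (by linarith), Real.sq_sqrt (by linarith)]
    nlinarith
  exact (pow_le_pow_iff_left₀ (by positivity) (by positivity) two_ne_zero).1 h1

theorem Finset.prod_one_sub_inv_ge_of_forall_prime {S : Finset ℕ} (hS : ∀ p ∈ S, p.Prime) (hne : S.Nonempty) :
    1 / (2 * √(2 * #S - 1)) ≤ ∏ p ∈ S, (1 - (p : ℝ)⁻¹) := by
  induction S using Finset.induction_on_max with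
  | empty => exact absurd hne not_nonempty_empty
  | insert q S hlt ih =>
    have hqS : q ∉ S := fun h => (hlt q h).false
    have hq : q.Prime := hS q (mem_insert_self q S)
    rw [prod_insert hqS, card_insert_of_notMem hqS, Nat.cast_add_one]
    have hq_inv : (q : ℝ)⁻¹ ≤ 2⁻¹ := by
      gcongr
      exact_mod_cast hq.two_le
    rcases S.eq_empty_or_nonempty with rfl | hSne
    · norm_num
      linarith
    have hSprime : ∀ p ∈ S, p.Prime := fun p hp => hS p (mem_insert_of_mem hp)
    have hcard : 2 * (#S + 1) ≤ q + 1 := by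
      rw [← card_insert_of_notMem hqS]
      refine Nat.two_mul_card_le_of_forall_prime_le fun p hp => ⟨hS p hp, ?_⟩
      rcases mem_insert.1 hp with rfl | hp
      exacts [le_rfl, (hlt p hp).le]
    set k : ℝ := (#S : ℝ)
    have hk : 1 ≤ k := Nat.one_le_cast.2 hSne.card_pos
    have hqk : 2 * k + 1 ≤ q := by simp only [k]; exact_mod_cast (by omega : 2 * #S + 1 ≤ q)
    have hstep : 1 - (2 * k + 1)⁻¹ ≤ 1 - (q : ℝ)⁻¹ := by
      gcongr
    have ha : 0 < √(2 * k - 1) := Real.sqrt_pos.2 (by linarith)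
    have hb : 0 < √(2 * k + 1) := Real.sqrt_pos.2 (by linarith)
    calc 1 / (2 * √(2 * (k + 1) - 1))
        = 1 / (2 * √(2 * k + 1)) := by ring_nf
      _ ≤ (1 - (2 * k + 1)⁻¹) * (1 / (2 * √(2 * k - 1))) := by
        rw [div_le_iff₀ (by positivity)]
        field_simp
        linarith [two_mul_add_one_mul_sqrt_le k (by linarith)]
      _ ≤ (1 - (q : ℝ)⁻¹) * ∏ p ∈ S, (1 - (p : ℝ)⁻¹) :=
        mul_le_mul hstep (ih hSprime hSne) (by positivity) (by linarith)

theorem Nat.totient_div_self_ge {n : ℕ} (hn : 1 < n) :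
    1 / (2 * √(2 * #n.primeFactors - 1)) ≤ (n.totient / n : ℝ) := by
  rw [Nat.cast_totient_eq_mul_prod, mul_div_cancel_left₀ _ (by positivity)]
  exact Finset.prod_one_sub_inv_ge_of_forall_prime (fun p => Nat.prime_of_mem_primeFactors)
    (Nat.nonempty_primeFactors.2 hn)

theorem stmt13_general (n s t : ℕ)
    (hs : n.primeFactors.card = s) (h2 : 2 ≤ s) (ht : 0 < t)
    (hbound : (t : ℝ) ≤ ((n : ℝ) + 1) / (2 ^ (s + 1) * Real.sqrt (2 * s - 1) + 1)) :
    (Nat.totient n : ℝ) / (2.2 * t) ≤ (legendrePhi (n / t) n : ℝ) := by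
  have hn : 1 < n := Nat.nonempty_primeFactors.1 (card_pos.1 (by omega))
  set x : ℝ := n.totient / n
  set r := √(2 * s - 1)
  have hr : 0 < r := by
    have : (2 : ℝ) ≤ s := by exact_mod_cast h2
    exact Real.sqrt_pos.2 (by linarith)
  have hx : 1 / (2 * r) ≤ x := by simpa only [hs] using Nat.totient_div_self_ge hn
  have hx1 : x ≤ 1 := div_le_one_of_le₀ (by exact_mod_cast n.totient_le) (by positivity)
  have ht1 : (1 : ℝ) ≤ t := by exact_mod_cast ht
  have hu : 2 ^ (s + 1) * r ≤ (n / t : ℝ) := by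
    rw [le_div_iff₀ (by positivity)]
    rw [le_div_iff₀ (by positivity)] at hbound
    linarith
  have hux : 2 ^ s ≤ (n / t : ℝ) * x := by
    calc (2 : ℝ) ^ s = 2 ^ (s + 1) * r * (1 / (2 * r)) := by field_simp; ring
      _ ≤ (n / t : ℝ) * x := by gcongr
  have hm : (n / t : ℝ) - 1 ≤ ((n / t : ℕ) : ℝ) := (Nat.cast_div_sub_one_lt n t).le
  have hΦ : ((n / t : ℕ) : ℝ) * x - (2 ^ s / 2 - 1) ≤ legendrePhi (n / t) n :=
    hs ▸ legendrePhi_ge (n / t) hn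
  have hmx := mul_le_mul_of_nonneg_right hm (by positivity : 0 ≤ x)
  have hgoal : (n.totient : ℝ) / (2.2 * t) = 5 / 11 * ((n / t : ℝ) * x) := by
    simp only [x]
    field_simp
    norm_num
  rw [hgoal]
  linarith [pow_pos (two_pos : (0 : ℝ) < 2) s]

theorem stmt13 (n s t : ℕ) (hn : 0 < n)
    (hs : n.primeFactors.card = s) (h2 : 2 ≤ s) (ht : 0 < t)
    (hbound : (t : ℝ) ≤ ((n : ℝ) + 1) / (2 ^ (s + 1) * Real.sqrt (2 * s - 1) + 1)) :
    (Nat.totient n : ℝ) / (2.2 * t) ≤ (legendrePhi (n / t) n : ℝ) :=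
  stmt13_general n s t hs h2 ht hbound
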